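/- arXiv:2304.00360 — 3 statements merged into one kernel-verified Lean document; each statement's English description precedes it below -/
import Mathlib

section
/- The series ∑_{k=0}^∞ (1/16)^k · binom(2k,k)^2 · H_k/(2k−1)^2 equals (12 − 16 ln 2)/π. -/
open Real

noncomputable def H (m : ℕ) : ℝ := ∑ i ∈ Finset.range m, (1 : ℝ) / (i + 1)

noncomputable def O (m : ℕ) : ℝ := ∑ i ∈ Finset.range m, (1 : ℝ) / (2 * i + 1)

/-!
Put `w k = binom(2k,k) / 4^k`. The `(k+1)`-st term of the series is `(w k - w (k+1))² H (k+1)`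
(the `0`-th vanishes as `H 0 = 0`), and Wallis' formula gives `∫₀^{π/2} sin²θ cos^{2k}θ dθ = π/2 · (w k - w (k+1))`. Replacing one
factor `w k - w (k+1)` by this integral turns the series into `2/π ∫₀^{π/2} tan²θ · G(cos²θ) dθ`
with `G(y) = ∑ (w k - w (k+1)) H (k+1) y^(k+1)`.

Since `∑ w k y^k = (1 - y)^(-1/2)` (binomial series), `∑ (w k - w (k+1)) y^(k+1) = 1 - √(1 - y)`.
Writing `H (k+1) = ∫₀¹ (1 - t^(k+1)) / (1 - t) dt` then gives
`G(y) = ∫₀¹ y / (√(1 - t y) + √(1 - y)) dt = 2 - 2s + 2s log (2s / (1 + s))` with `s = √(1 - y)`,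
and the remaining `θ`-integral is elementary: it equals `6 - 8 log 2`. Every term is nonnegative,
so all exchanges of sums and integrals are monotone convergence.
-/

open MeasureTheory Filter Topology Set
open scoped Interval

theorem hasSum_intervalIntegral_of_nonneg {a b : ℝ} (hab : a ≤ b) {F : ℕ → ℝ → ℝ} {g : ℝ → ℝ}
    (hF : ∀ n, Continuous (F n)) (hF_nonneg : ∀ n, ∀ t ∈ Ioo a b, 0 ≤ F n t)
    (hg : IntervalIntegrable g volume a b)
    (h_lim : ∀ t ∈ Ioo a b, HasSum (fun n => F n t) (g t)) :
    HasSum (fun n => ∫ t in a..b, F n t) (∫ t in a..b, g t) := by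
  have h_ae : ∀ᵐ t, t ∈ Ι a b → t ∈ Ioo a b := by
    filter_upwards [Measure.ae_ne volume b] with t htb ht
    rw [uIoc_of_le hab] at ht
    exact ⟨ht.1, lt_of_le_of_ne ht.2 htb⟩
  refine intervalIntegral.hasSum_integral_of_dominated_convergence F
    (fun n => (hF n).aestronglyMeasurable) (fun n => ?_) ?_ ?_ ?_
  · filter_upwards [h_ae] with t ht ht'
    rw [norm_of_nonneg (hF_nonneg n t (ht ht'))]
  · filter_upwards [h_ae] with t ht ht' using (h_lim t (ht ht')).summable
  · refine hg.congr_ae ?_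
    rw [EventuallyEq, ae_restrict_iff' measurableSet_uIoc]
    filter_upwards [h_ae] with t ht ht' using ((h_lim t (ht ht')).tsum_eq).symm
  · filter_upwards [h_ae] with t ht ht' using h_lim t (ht ht')

theorem intervalIntegrable_deriv_of_nonneg_of_tendsto {f f' : ℝ → ℝ} {a b fa fb : ℝ}
    (hab : a < b) (hderiv : ∀ x ∈ Ioo a b, HasDerivAt f (f' x) x)
    (hpos : ∀ x ∈ Ioo a b, 0 ≤ f' x) (ha : Tendsto f (𝓝[>] a) (𝓝 fa))
    (hb : Tendsto f (𝓝[<] b) (𝓝 fb)) :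
    IntervalIntegrable f' volume a b := by
  classical
  set F := Function.update (Function.update f a fa) b fb
  have hFf : EqOn F f (Ioo a b) := fun x hx => by
    simp only [F, Function.update_of_ne hx.2.ne, Function.update_of_ne hx.1.ne']
  have hcont : ContinuousOn F (Icc a b) := by
    rw [continuousOn_update_iff, continuousOn_update_iff, Icc_sdiff_right, Ico_sdiff_left]
    refine ⟨⟨fun z hz => (hderiv z hz).continuousAt.continuousWithinAt, ?_⟩, ?_⟩
    · exact fun _ => ha.mono_left (nhdsWithin_mono _ Ioo_subset_Ioi_self)
    · rintro -
      refine (hb.congr' ?_).mono_left (nhdsWithin_mono _ Ico_subset_Iio_self)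
      filter_upwards [Ioo_mem_nhdsLT hab] with _ hz
        using (Function.update_of_ne hz.1.ne' _ _).symm
  refine intervalIntegral.intervalIntegrable_deriv_of_nonneg (g := F)
    (by rwa [uIcc_of_le hab.le]) (fun x hx => ?_) (by simpa [hab.le] using hpos)
  simp only [hab.le, min_eq_left, max_eq_right] at hx
  exact (hderiv x hx).congr_of_eventuallyEq (hFf.eventuallyEq_of_mem (Ioo_mem_nhds hx.1 hx.2))

namespace CentralBinomHarmonic

lemma sin_pos_and_cos_pos {θ : ℝ} (hθ : θ ∈ Ioo 0 (π / 2)) : 0 < sin θ ∧ 0 < cos θ :=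
  ⟨sin_pos_of_pos_of_lt_pi hθ.1 (by linarith [hθ.2, pi_pos]),
    cos_pos_of_mem_Ioo ⟨by linarith [hθ.1, pi_pos], hθ.2⟩⟩

lemma H_nonneg (m : ℕ) : 0 ≤ H m := Finset.sum_nonneg fun i _ => by positivity

lemma H_eq_integral_geom_sum (m : ℕ) : H m = ∫ t in (0)..1, ∑ i ∈ Finset.range m, t ^ i := by
  rw [intervalIntegral.integral_finsetSum fun i _ => (continuous_pow i).intervalIntegrable _ _]
  simp [H, integral_pow]

noncomputable def wallisRatio (k : ℕ) : ℝ := Nat.centralBinom k / 4 ^ k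

@[simp] lemma wallisRatio_zero : wallisRatio 0 = 1 := by simp [wallisRatio]

lemma wallisRatio_succ (k : ℕ) :
    wallisRatio (k + 1) = wallisRatio k * ((2 * k + 1) / (2 * k + 2)) := by
  have h : ((k : ℝ) + 1) * Nat.centralBinom (k + 1) = 2 * (2 * k + 1) * Nat.centralBinom k := by
    exact_mod_cast Nat.succ_mul_centralBinom_succ k
  rw [wallisRatio, wallisRatio, pow_succ]
  field_simp
  linear_combination 2 * h

lemma wallisRatio_nonneg (k : ℕ) : 0 ≤ wallisRatio k := by
  unfold wallisRatio; positivity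

lemma wallisRatio_sub_succ (k : ℕ) :
    wallisRatio k - wallisRatio (k + 1) = wallisRatio (k + 1) / (2 * k + 1) := by
  rw [wallisRatio_succ]; field_simp; ring

lemma wallisRatio_sub_succ_nonneg (k : ℕ) : 0 ≤ wallisRatio k - wallisRatio (k + 1) := by
  rw [wallisRatio_sub_succ]; have := wallisRatio_nonneg (k + 1); positivity

lemma integral_cos_pow_two_mul (k : ℕ) :
    ∫ x in (0)..(π / 2), cos x ^ (2 * k) = π / 2 * wallisRatio k := by
  induction k with
  | zero => simp
  | succ k ih =>
    rw [mul_add, mul_one, integral_cos_pow, ih, wallisRatio_succ, cos_pi_div_two, sin_zero,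
      zero_pow (by omega), zero_mul, mul_zero, sub_zero, zero_div, zero_add]
    push_cast
    ring

lemma integral_sin_sq_mul_cos_pow_two_mul (k : ℕ) :
    ∫ x in (0)..(π / 2), sin x ^ 2 * cos x ^ (2 * k)
      = π / 2 * (wallisRatio k - wallisRatio (k + 1)) := by
  have h : ∀ x, sin x ^ 2 * cos x ^ (2 * k) = cos x ^ (2 * k) - cos x ^ (2 * (k + 1)) := by
    intro x
    rw [sin_sq, mul_add, mul_one, pow_add]
    ring
  simp_rw [h]
  rw [intervalIntegral.integral_sub (f := fun x => cos x ^ (2 * k))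
    (g := fun x => cos x ^ (2 * (k + 1))) ((continuous_cos.pow _).intervalIntegrable _ _)
    ((continuous_cos.pow _).intervalIntegrable _ _), integral_cos_pow_two_mul,
    integral_cos_pow_two_mul]
  ring

lemma ascPochhammer_eval_half (n : ℕ) :
    (ascPochhammer ℝ n).eval (1 / 2) = n.factorial * wallisRatio n := by
  induction n with
  | zero => simp
  | succ n ih =>
    rw [ascPochhammer_succ_eval, ih, wallisRatio_succ, Nat.factorial_succ]
    push_cast
    field_simp
    ring

lemma multichoose_half (n : ℕ) : Ring.multichoose (1 / 2 : ℝ) n = wallisRatio n := by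
  have h := Ring.factorial_nsmul_multichoose_eq_ascPochhammer (1 / 2 : ℝ) n
  rw [Polynomial.ascPochhammer_smeval_eq_eval, ascPochhammer_eval_half, nsmul_eq_mul] at h
  exact mul_left_cancel₀ (by positivity) h

lemma hasSum_wallisRatio_mul_pow {y : ℝ} (hy : |y| < 1) :
    HasSum (fun n => wallisRatio n * y ^ n) (1 / √(1 - y)) := by
  have h := (one_div_one_sub_rpow_hasFPowerSeriesOnBall_zero (1 / 2)).hasSum
    (y := y) (by simpa [enorm_eq_nnnorm, ← NNReal.coe_lt_coe] using hy)
  simp only [FormalMultilinearSeries.ofScalars_apply_eq, smul_eq_mul, zero_add] at h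
  simp only [← Ring.multichoose_eq, multichoose_half] at h
  rwa [sqrt_eq_rpow]

lemma hasSum_wallisRatio_sub_mul_pow {y : ℝ} (hy : |y| < 1) :
    HasSum (fun k => (wallisRatio k - wallisRatio (k + 1)) * y ^ (k + 1)) (1 - √(1 - y)) := by
  have h := hasSum_wallisRatio_mul_pow hy
  have h_shift := (hasSum_nat_add_iff' 1).mpr h
  have hs : 0 < √(1 - y) := sqrt_pos.mpr (by linarith [le_abs_self y])
  have hval : y * (1 / √(1 - y)) - (1 / √(1 - y) - ∑ i ∈ Finset.range 1, wallisRatio i * y ^ i)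
      = 1 - √(1 - y) := by
    rw [Finset.sum_range_one, wallisRatio_zero, pow_zero, mul_one]
    field_simp
    nlinarith [sq_sqrt (by linarith [le_abs_self y] : 0 ≤ 1 - y)]
  rw [← hval]
  exact ((h.mul_left y).sub h_shift).congr_fun fun k => by ring

noncomputable def harmonicGenFun (s : ℝ) : ℝ := 2 - 2 * s + 2 * s * log (2 * s / (1 + s))

lemma integral_div_sqrt_add_sqrt {y : ℝ} (hy : y < 1) :
    ∫ t in (0)..1, y / (√(1 - t * y) + √(1 - y)) = harmonicGenFun (√(1 - y)) := by
  set s := √(1 - y)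
  have hs : 0 < s := sqrt_pos.mpr (by linarith)
  have hderiv : ∀ t ∈ uIcc (0 : ℝ) 1,
      HasDerivAt (fun t => -2 * √(1 - t * y) + 2 * s * log (√(1 - t * y) + s))
        (y / (√(1 - t * y) + s)) t := by
    intro t ht
    rw [uIcc_of_le zero_le_one] at ht
    have hty : 0 < 1 - t * y := by cases le_total 0 y <;> nlinarith [ht.1, ht.2]
    have hv : 0 < √(1 - t * y) := sqrt_pos.mpr hty
    have hsqrt : HasDerivAt (fun t => √(1 - t * y)) (-y / (2 * √(1 - t * y))) t := by
      have hin : HasDerivAt (fun t => 1 - t * y) (-y) t := by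
        simpa using ((hasDerivAt_id t).mul_const y).const_sub 1
      convert hin.sqrt hty.ne' using 1
    refine ((hsqrt.const_mul (-2)).add
      (((hsqrt.add_const s).log (by positivity)).const_mul (2 * s))).congr_deriv ?_
    set v := √(1 - t * y)
    field_simp
    ring
  have hcont : Continuous fun t => y / (√(1 - t * y) + s) :=
    continuous_const.div (by fun_prop) fun t => by positivity
  rw [intervalIntegral.integral_eq_sub_of_hasDerivAt hderiv (hcont.intervalIntegrable _ _),
    harmonicGenFun, log_div (by positivity) (by positivity)]
  simp only [one_mul, zero_mul, sub_zero, sqrt_one, show √(1 - y) = s from rfl, ← two_mul]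
  ring

lemma hasSum_mul_pow_mul_geom_sum {y t : ℝ} (hy : |y| < 1) (ht0 : 0 ≤ t) (ht1 : t < 1) :
    HasSum (fun k => (wallisRatio k - wallisRatio (k + 1)) * y ^ (k + 1) *
      ∑ i ∈ Finset.range (k + 1), t ^ i) (y / (√(1 - t * y) + √(1 - y))) := by
  have hty : |t * y| < 1 := by
    rw [abs_mul, abs_of_nonneg ht0]; nlinarith [abs_nonneg y]
  have h := ((hasSum_wallisRatio_sub_mul_pow hy).sub
    (hasSum_wallisRatio_sub_mul_pow hty)).div_const (1 - t)
  have ht : 1 - t ≠ 0 := by linarith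
  have hv : 0 < √(1 - t * y) := sqrt_pos.mpr (by linarith [le_abs_self (t * y)])
  have hs : 0 < √(1 - y) := sqrt_pos.mpr (by linarith [le_abs_self y])
  have hval : (1 - √(1 - y) - (1 - √(1 - t * y))) / (1 - t)
      = y / (√(1 - t * y) + √(1 - y)) := by
    rw [div_eq_div_iff ht (by positivity)]
    nlinarith [sq_sqrt (by linarith [le_abs_self (t * y)] : 0 ≤ 1 - t * y),
      sq_sqrt (by linarith [le_abs_self y] : 0 ≤ 1 - y)]
  rw [← hval]
  refine h.congr_fun fun k => ?_
  rw [eq_div_iff ht, mul_pow, mul_assoc, mul_assoc, mul_comm (∑ i ∈ _, _), mul_neg_geom_sum]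
  ring

lemma hasSum_harmonic_mul_pow {y : ℝ} (hy0 : 0 ≤ y) (hy1 : y < 1) :
    HasSum (fun k => (wallisRatio k - wallisRatio (k + 1)) * H (k + 1) * y ^ (k + 1))
      (harmonicGenFun (√(1 - y))) := by
  have hs : 0 < √(1 - y) := sqrt_pos.mpr (by linarith)
  have hcont : Continuous fun t => y / (√(1 - t * y) + √(1 - y)) :=
    continuous_const.div (by fun_prop) fun t => by positivity
  have h := hasSum_intervalIntegral_of_nonneg zero_le_one (fun k => by fun_prop)
    (fun k t ht => ?_) (hcont.intervalIntegrable 0 1)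
    (fun t ht => hasSum_mul_pow_mul_geom_sum (abs_lt.mpr ⟨by linarith, hy1⟩) ht.1.le ht.2)
  · rw [← integral_div_sqrt_add_sqrt hy1]
    refine h.congr_fun fun k => ?_
    rw [intervalIntegral.integral_const_mul, H_eq_integral_geom_sum]
    ring
  · have := wallisRatio_sub_succ_nonneg k
    have : 0 ≤ ∑ i ∈ Finset.range (k + 1), t ^ i :=
      Finset.sum_nonneg fun i _ => pow_nonneg ht.1.le i
    positivity

lemma harmonic_mul_sin_sq_mul_cos_pow_nonneg (k : ℕ) (θ : ℝ) :
    0 ≤ (wallisRatio k - wallisRatio (k + 1)) * H (k + 1) * (sin θ ^ 2 * cos θ ^ (2 * k)) := by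
  have := wallisRatio_sub_succ_nonneg k
  have := H_nonneg (k + 1)
  have : 0 ≤ cos θ ^ (2 * k) := by rw [pow_mul]; positivity
  positivity

lemma hasSum_harmonic_mul_sin_sq_mul_cos_pow {θ : ℝ} (hθ : θ ∈ Ioo 0 (π / 2)) :
    HasSum (fun k => (wallisRatio k - wallisRatio (k + 1)) * H (k + 1) *
      (sin θ ^ 2 * cos θ ^ (2 * k))) (sin θ ^ 2 / cos θ ^ 2 * harmonicGenFun (sin θ)) := by
  obtain ⟨hs, hc⟩ := sin_pos_and_cos_pos hθ
  have hsqrt : √(1 - cos θ ^ 2) = sin θ := by rw [← sin_sq, sqrt_sq hs.le]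
  have h := (hasSum_harmonic_mul_pow (sq_nonneg (cos θ))
    (by nlinarith [sin_sq_add_cos_sq θ])).mul_left (sin θ ^ 2 / cos θ ^ 2)
  rw [hsqrt] at h
  refine h.congr_fun fun k => ?_
  rw [pow_mul, pow_succ]
  field_simp
  ring

-- Integrating `2 sin³θ / cos²θ · log (2 sin θ / (1 + sin θ))` by parts against
-- `cos θ + 1 / cos θ` leaves only rational functions of `sin θ` and `cos θ`.
noncomputable def Ψ (θ : ℝ) : ℝ :=
  -2 * cos θ - 4 * cos θ / (1 + sin θ)
    + 2 * (cos θ + 1 / cos θ) * log (2 * sin θ / (1 + sin θ)) + 4 * log ((1 + cos θ) / sin θ)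

lemma hasDerivAt_Ψ {θ : ℝ} (hθ : θ ∈ Ioo 0 (π / 2)) :
    HasDerivAt Ψ (sin θ ^ 2 / cos θ ^ 2 * harmonicGenFun (sin θ)) θ := by
  obtain ⟨hs, hc⟩ := sin_pos_and_cos_pos hθ
  have h1s : 0 < 1 + sin θ := by linarith
  have h1c : 0 < 1 + cos θ := by linarith
  have hsin := hasDerivAt_sin θ
  have hcos := hasDerivAt_cos θ
  have hL := ((hsin.const_mul 2).fun_div (hsin.const_add 1) h1s.ne').log (by positivity)
  have hM := ((hcos.const_add 1).fun_div hsin hs.ne').log (by positivity)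
  have h := (((hcos.const_mul (-2)).fun_sub
    ((hcos.const_mul 4).fun_div (hsin.const_add 1) h1s.ne')).fun_add
    (((hcos.fun_add ((hasDerivAt_const θ (1 : ℝ)).fun_div hcos hc.ne')).const_mul 2).fun_mul
      hL)).fun_add (hM.const_mul 4)
  refine h.congr_deriv ?_
  clear h hL hM hsin hcos
  rw [harmonicGenFun]
  have e : sin θ ^ 2 + cos θ ^ 2 = 1 := sin_sq_add_cos_sq θ
  field_simp
  grind

lemma tendsto_Ψ_nhdsGT_zero : Tendsto Ψ (𝓝[>] 0) (𝓝 (8 * log 2 - 6)) := by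
  -- the divergent `log (sin θ)` terms combine to `2 (1 - cos θ)² / cos θ · log (sin θ)`,
  -- a bounded multiple of `sin θ · log (sin θ)`
  set Ψ₀ : ℝ → ℝ := fun θ => -2 * cos θ - 4 * cos θ / (1 + sin θ)
    + 2 * (cos θ + 1 / cos θ) * log (2 / (1 + sin θ)) + 4 * log (1 + cos θ)
    + 2 * (sin θ ^ 3 / ((1 + cos θ) ^ 2 * cos θ)) * (sin θ * log (sin θ)) with hΨ₀
  have hmul_log : ContinuousAt (fun θ => sin θ * log (sin θ)) 0 :=
    (continuous_mul_log.comp continuous_sin).continuousAt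
  have hcont : ContinuousAt Ψ₀ 0 := by
    rw [hΨ₀]
    fun_prop (disch := norm_num)
  have hval : Ψ₀ 0 = 8 * log 2 - 6 := by
    norm_num [hΨ₀]
    ring
  rw [← hval]
  refine (hcont.tendsto.mono_left nhdsWithin_le_nhds).congr' ?_
  filter_upwards [Ioo_mem_nhdsGT (by positivity : (0 : ℝ) < π / 2)] with θ hθ
  obtain ⟨hs, hc⟩ := sin_pos_and_cos_pos hθ
  have e : sin θ ^ 2 + cos θ ^ 2 = 1 := sin_sq_add_cos_sq θ
  simp only [hΨ₀, Ψ]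
  rw [log_div (x := 2 * sin θ) (by positivity) (by positivity), log_mul two_ne_zero hs.ne',
    log_div two_ne_zero (by positivity), log_div (by positivity) hs.ne']
  field_simp
  grind

lemma tendsto_Ψ_nhdsLT_pi_div_two : Tendsto Ψ (𝓝[<] (π / 2)) (𝓝 0) := by
  set A : ℝ → ℝ := fun θ => -2 * cos θ - 4 * cos θ / (1 + sin θ)
    + 2 * cos θ * log (2 * sin θ / (1 + sin θ)) + 4 * log ((1 + cos θ) / sin θ) with hA
  set B : ℝ → ℝ := fun θ => 2 / cos θ * log (2 * sin θ / (1 + sin θ)) with hB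
  have hΨ : Ψ = fun θ => A θ + B θ := by
    funext θ
    simp only [Ψ, hA, hB]
    ring
  have hA_cont : ContinuousAt A (π / 2) := by
    rw [hA]
    fun_prop (disch := norm_num)
  have hA_val : A (π / 2) = 0 := by simp [hA]
  have hB_lim : Tendsto B (𝓝[<] (π / 2)) (𝓝 0) := by
    have hbound : Tendsto (fun θ => cos θ / sin θ) (𝓝[<] (π / 2)) (𝓝 0) := by
      have : ContinuousAt (fun θ => cos θ / sin θ) (π / 2) := by fun_prop (disch := norm_num)
      simpa using this.tendsto.mono_left nhdsWithin_le_nhds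
    -- `|log x| ≤ 1/x - 1` for `x ≤ 1` and `1 - sin θ ≤ cos² θ` give `|B θ| ≤ cos θ / sin θ`
    refine squeeze_zero_norm' ?_ hbound
    filter_upwards [Ioo_mem_nhdsLT (by positivity : (0 : ℝ) < π / 2)] with θ hθ
    obtain ⟨hs, hc⟩ := sin_pos_and_cos_pos hθ
    have e : sin θ ^ 2 + cos θ ^ 2 = 1 := sin_sq_add_cos_sq θ
    have hlog_nonpos : log (2 * sin θ / (1 + sin θ)) ≤ 0 :=
      log_nonpos (by positivity) (by rw [div_le_one (by positivity)]; linarith [sin_le_one θ])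
    have hlog_ge := one_sub_inv_le_log_of_pos (by positivity : 0 < 2 * sin θ / (1 + sin θ))
    rw [inv_div] at hlog_ge
    rw [hB, norm_mul, norm_div, Real.norm_of_nonneg (by positivity), Real.norm_of_nonneg hc.le,
      Real.norm_of_nonpos hlog_nonpos]
    rw [div_mul_eq_mul_div, div_le_div_iff₀ hc hs]
    have : 1 - (1 + sin θ) / (2 * sin θ) = - (1 - sin θ) / (2 * sin θ) := by field_simp; ring
    rw [this, div_le_iff₀ (by positivity)] at hlog_ge
    nlinarith [sin_le_one θ]
  simpa [hΨ, hA_val] using (hA_cont.tendsto.mono_left nhdsWithin_le_nhds).add hB_lim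

lemma integral_tan_sq_mul_harmonicGenFun :
    IntervalIntegrable (fun θ => sin θ ^ 2 / cos θ ^ 2 * harmonicGenFun (sin θ)) volume 0 (π / 2)
      ∧ ∫ θ in (0)..(π / 2), sin θ ^ 2 / cos θ ^ 2 * harmonicGenFun (sin θ) = 6 - 8 * log 2 := by
  have hpos : (0 : ℝ) < π / 2 := by positivity
  have hnonneg : ∀ θ ∈ Ioo 0 (π / 2), 0 ≤ sin θ ^ 2 / cos θ ^ 2 * harmonicGenFun (sin θ) :=
    fun θ hθ => (hasSum_harmonic_mul_sin_sq_mul_cos_pow hθ).nonneg fun k =>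
      harmonic_mul_sin_sq_mul_cos_pow_nonneg k θ
  have hint := intervalIntegrable_deriv_of_nonneg_of_tendsto hpos (fun θ hθ => hasDerivAt_Ψ hθ)
    hnonneg tendsto_Ψ_nhdsGT_zero tendsto_Ψ_nhdsLT_pi_div_two
  refine ⟨hint, ?_⟩
  rw [intervalIntegral.integral_eq_sub_of_hasDerivAt_of_tendsto hpos
    (fun θ hθ => hasDerivAt_Ψ hθ) hint tendsto_Ψ_nhdsGT_zero tendsto_Ψ_nhdsLT_pi_div_two]
  ring

lemma hasSum_sq_mul_harmonic :
    HasSum (fun k => (wallisRatio k - wallisRatio (k + 1)) ^ 2 * H (k + 1))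
      (2 / π * (6 - 8 * log 2)) := by
  obtain ⟨hint, hval⟩ := integral_tan_sq_mul_harmonicGenFun
  have h := hasSum_intervalIntegral_of_nonneg (by positivity : (0 : ℝ) ≤ π / 2)
    (fun k => by fun_prop) (fun k θ _ => harmonic_mul_sin_sq_mul_cos_pow_nonneg k θ) hint
    (fun θ hθ => hasSum_harmonic_mul_sin_sq_mul_cos_pow hθ)
  rw [hval] at h
  refine (h.mul_left (2 / π)).congr_fun fun k => ?_
  rw [intervalIntegral.integral_const_mul, integral_sin_sq_mul_cos_pow_two_mul]
  field_simp

lemma term_succ_eq (k : ℕ) :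
    (1 / 16 : ℝ) ^ (k + 1) * (Nat.centralBinom (k + 1) : ℝ) ^ 2
        * (H (k + 1) / (2 * ((k + 1 : ℕ) : ℝ) - 1) ^ 2)
      = (wallisRatio k - wallisRatio (k + 1)) ^ 2 * H (k + 1) := by
  have h16 : (1 / 16 : ℝ) ^ (k + 1) = 1 / ((4 : ℝ) ^ (k + 1)) ^ 2 := by
    rw [← pow_mul, mul_comm, pow_mul, div_pow, one_pow]; norm_num
  rw [h16, wallisRatio_sub_succ, wallisRatio, Nat.cast_succ,
    show 2 * ((k : ℝ) + 1) - 1 = 2 * k + 1 by ring]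
  field_simp

end CentralBinomHarmonic

theorem stmt10 :
    ∑' k : ℕ, (1 / 16 : ℝ) ^ k * (Nat.centralBinom k : ℝ) ^ 2 * (H k / (2 * (k : ℝ) - 1) ^ 2)
      = (12 - 16 * Real.log 2) / π := by
  refine HasSum.tsum_eq ((hasSum_nat_add_iff' 1).mp ?_)
  simp only [Finset.sum_range_one, H, Finset.range_zero, Finset.sum_empty, zero_div, mul_zero,
    sub_zero]
  rw [show (12 - 16 * log 2) / π = 2 / π * (6 - 8 * log 2) by ring]
  exact CentralBinomHarmonic.hasSum_sq_mul_harmonic.congr_fun CentralBinomHarmonic.term_succ_eq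
end

section
/- The series ∑_{n=0}^∞ (1/4)^n · binom(2n,n)/(4n+1) equals Γ(1/4)^2/(4√(2π)), and it equals the integral ∫_0^1 dt/√(1−t^4). -/
/-!
Since `binom(2n, n) / 4^n` are the coefficients of the binomial series of `(1 - x)^(-1/2)`,
integrating `1 / √(1 - t^4) = ∑ binom(2n, n) / 4^n · t^(4n)` termwise over `(0, 1)` gives the
series; the interchange is justified because the series of integrals converges, its terms being
dominated by the telescoping series `2 (c_n - c_{n+1})` for `c_n = binom(2n, n) / 4^n`.
The substitution `x = t^4` turns the integral into `B(1/4, 1/2) / 4`, which is evaluated with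
`Γ(1/2) = √π` and the reflection formula `Γ(1/4) Γ(3/4) = π / sin(π/4)`.
-/

open Real MeasureTheory Set Polynomial

lemma ascPochhammer_eval_one_half_mul_four_pow (n : ℕ) :
    (ascPochhammer ℝ n).eval (1 / 2) * 4 ^ n = n.factorial * n.centralBinom := by
  induction n with
  | zero => simp
  | succ n ih =>
    have h : ((n + 1 : ℕ) : ℝ) * (n + 1).centralBinom = 2 * (2 * n + 1) * n.centralBinom := by
      exact_mod_cast n.succ_mul_centralBinom_succ
    rw [ascPochhammer_succ_eval, Nat.factorial_succ, Nat.cast_mul]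
    linear_combination (2 * (2 * n + 1) : ℝ) * ih - (n.factorial : ℝ) * h

lemma Ring.multichoose_one_half (n : ℕ) :
    Ring.multichoose (1 / 2 : ℝ) n = n.centralBinom / 4 ^ n := by
  have hfac := Ring.factorial_nsmul_multichoose_eq_ascPochhammer (1 / 2 : ℝ) n
  rw [ascPochhammer_smeval_eq_eval, nsmul_eq_mul] at hfac
  rw [eq_div_iff (by positivity)]
  refine mul_left_cancel₀ (Nat.cast_ne_zero.2 n.factorial_ne_zero) ?_
  rw [← mul_assoc, hfac, ascPochhammer_eval_one_half_mul_four_pow]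

lemma hasSum_centralBinom_div_four_pow_mul_pow {x : ℝ} (hx : |x| < 1) :
    HasSum (fun n ↦ (n.centralBinom / 4 ^ n : ℝ) * x ^ n) (1 / √(1 - x)) := by
  have h := (one_div_one_sub_rpow_hasFPowerSeriesOnBall_zero (1 / 2)).hasSum (y := x)
    (by simpa [enorm_eq_nnnorm, ← NNReal.coe_lt_coe] using hx)
  simpa only [FormalMultilinearSeries.ofScalars_apply_eq, zero_add, smul_eq_mul,
    ← Ring.multichoose_eq, Ring.multichoose_one_half, ← sqrt_eq_rpow] using h

lemma centralBinom_succ_div_four_pow (n : ℕ) :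
    ((n + 1).centralBinom / 4 ^ (n + 1) : ℝ) =
      (2 * n + 1) / (2 * n + 2) * (n.centralBinom / 4 ^ n) := by
  have h : ((n + 1 : ℕ) : ℝ) * (n + 1).centralBinom = 2 * (2 * n + 1) * n.centralBinom := by
    exact_mod_cast n.succ_mul_centralBinom_succ
  push_cast at h
  rw [pow_succ]
  field_simp
  linear_combination 2 * h

lemma summable_centralBinom_div_four_pow_div :
    Summable fun n : ℕ ↦ (n.centralBinom / 4 ^ n : ℝ) / (4 * n + 1) := by
  set c : ℕ → ℝ := fun n ↦ n.centralBinom / 4 ^ n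
  have hc : ∀ n, 0 ≤ c n := fun n ↦ by positivity
  have hle : ∀ n : ℕ, c n / (4 * n + 1) ≤ 2 * (c n - c (n + 1)) := fun n ↦ by
    simp only [c, centralBinom_succ_div_four_pow]
    rw [div_le_iff₀ (by positivity)]
    field_simp
    nlinarith [hc n]
  refine summable_of_sum_range_le (c := 2) (fun n ↦ by positivity) fun n ↦ ?_
  calc ∑ i ∈ Finset.range n, c i / (4 * i + 1)
      ≤ ∑ i ∈ Finset.range n, 2 * (c i - c (i + 1)) := Finset.sum_le_sum fun i _ ↦ hle i
    _ = 2 * (1 - c n) := by rw [← Finset.mul_sum, Finset.sum_range_sub']; simp [c]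
    _ ≤ 2 := by linarith [hc n]

lemma integral_Ioo_zero_one_pow (n : ℕ) : ∫ t in Ioo (0 : ℝ) 1, t ^ n = 1 / (n + 1) := by
  rw [← integral_Ioc_eq_integral_Ioo, ← intervalIntegral.integral_of_le zero_le_one, integral_pow]
  simp

lemma hasSum_centralBinom_div_four_pow_div :
    HasSum (fun n : ℕ ↦ (n.centralBinom / 4 ^ n : ℝ) / (4 * n + 1))
      (∫ t in Ioo (0 : ℝ) 1, 1 / √(1 - t ^ 4)) := by
  set F : ℕ → ℝ → ℝ := fun n t ↦ (n.centralBinom / 4 ^ n : ℝ) * t ^ (4 * n)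
  have hF : ∀ n, ∫ t in Ioo (0 : ℝ) 1, F n t = (n.centralBinom / 4 ^ n : ℝ) / (4 * n + 1) :=
    fun n ↦ by
      simp only [F, integral_const_mul, integral_Ioo_zero_one_pow]
      push_cast
      ring
  have hF_int : ∀ n, IntegrableOn (F n) (Ioo (0 : ℝ) 1) := fun n ↦
    (Continuous.integrableOn_Icc (by fun_prop : Continuous (F n))).mono_set Ioo_subset_Icc_self
  have hF_norm : ∀ n, ∫ t in Ioo (0 : ℝ) 1, ‖F n t‖ = ∫ t in Ioo (0 : ℝ) 1, F n t := fun n ↦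
    setIntegral_congr_fun measurableSet_Ioo fun t ht ↦ norm_of_nonneg (by have := ht.1; positivity)
  have h := hasSum_integral_of_summable_integral_norm hF_int
    (by simpa only [hF_norm, hF] using summable_centralBinom_div_four_pow_div)
  have hsum : ∀ t ∈ Ioo (0 : ℝ) 1, ∑' n, F n t = 1 / √(1 - t ^ 4) := fun t ht ↦ by
    have ht4 : |t ^ 4| < 1 := by
      rw [abs_of_nonneg (by positivity)]
      exact pow_lt_one₀ ht.1.le ht.2 (by norm_num)
    simpa only [F, pow_mul] using (hasSum_centralBinom_div_four_pow_mul_pow ht4).tsum_eq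
  rwa [setIntegral_congr_fun measurableSet_Ioo hsum, funext hF] at h

lemma Real.Gamma_mul_Gamma_eq_integral {a b : ℝ} (ha : 0 < a) (hb : 0 < b) :
    Gamma a * Gamma b =
      Gamma (a + b) * ∫ x in Ioo (0 : ℝ) 1, x ^ (a - 1) * (1 - x) ^ (b - 1) := by
  have h := Complex.Gamma_mul_Gamma_eq_betaIntegral (s := a) (t := b) (by simpa) (by simpa)
  have hB : Complex.betaIntegral a b =
      ↑(∫ x in Ioo (0 : ℝ) 1, x ^ (a - 1) * (1 - x) ^ (b - 1)) := by
    rw [Complex.betaIntegral, ← integral_Ioc_eq_integral_Ioo,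
      ← intervalIntegral.integral_of_le zero_le_one, ← intervalIntegral.integral_ofReal]
    refine intervalIntegral.integral_congr fun x hx ↦ ?_
    rw [uIcc_of_le zero_le_one] at hx
    push_cast
    rw [Complex.ofReal_cpow hx.1, Complex.ofReal_cpow (sub_nonneg.2 hx.2)]
    push_cast
    rfl
  rw [hB, ← Complex.ofReal_add, Complex.Gamma_ofReal, Complex.Gamma_ofReal,
    Complex.Gamma_ofReal] at h
  exact_mod_cast h

lemma Real.Gamma_one_fourth_mul_Gamma_three_fourths :
    Gamma (1 / 4) * Gamma (3 / 4) = √2 * π := by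
  have h := Gamma_mul_Gamma_one_sub (1 / 4)
  rw [show π * (1 / 4) = π / 4 by ring, sin_pi_div_four] at h
  norm_num at h
  rw [h, div_div_eq_mul_div, div_eq_iff (by positivity)]
  linear_combination (-π) * sq_sqrt (zero_le_two : (0 : ℝ) ≤ 2)

lemma integral_Ioo_zero_one_comp_pow {n : ℕ} (hn : n ≠ 0) (g : ℝ → ℝ) :
    ∫ t in Ioo (0 : ℝ) 1, n * t ^ (n - 1) * g (t ^ n) = ∫ x in Ioo (0 : ℝ) 1, g x := by
  have hmono : StrictMonoOn (· ^ n : ℝ → ℝ) (Icc 0 1) :=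
    (pow_left_strictMonoOn₀ hn).mono fun x hx ↦ hx.1
  have himage : (· ^ n) '' Ioo (0 : ℝ) 1 = Ioo 0 1 := by
    rw [(continuous_pow n).continuousOn.image_Ioo_of_strictMonoOn zero_le_one hmono]
    simp [hn]
  have h := integral_image_eq_integral_abs_deriv_smul measurableSet_Ioo
    (fun x _ ↦ (hasDerivAt_pow n x).hasDerivWithinAt) (hmono.injOn.mono Ioo_subset_Icc_self) g
  rw [himage] at h
  rw [h]
  refine setIntegral_congr_fun measurableSet_Ioo fun t ht ↦ ?_
  rw [smul_eq_mul, abs_of_nonneg (by have := ht.1; positivity)]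

lemma integral_one_div_sqrt_one_sub_pow_four :
    ∫ t in Ioo (0 : ℝ) 1, 1 / √(1 - t ^ 4) = Gamma (1 / 4) ^ 2 / (4 * √(2 * π)) := by
  set I := ∫ t in Ioo (0 : ℝ) 1, 1 / √(1 - t ^ 4)
  have hsubst : 4 * I =
      ∫ x in Ioo (0 : ℝ) 1, x ^ ((1 : ℝ) / 4 - 1) * (1 - x) ^ ((1 : ℝ) / 2 - 1) := by
    rw [← integral_Ioo_zero_one_comp_pow (n := 4) (by norm_num)
      (fun x ↦ x ^ ((1 : ℝ) / 4 - 1) * (1 - x) ^ ((1 : ℝ) / 2 - 1)), ← integral_const_mul]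
    refine setIntegral_congr_fun measurableSet_Ioo fun t ⟨ht0, ht1⟩ ↦ ?_
    have h1 : (t ^ 4) ^ ((1 : ℝ) / 4 - 1) = (t ^ 3)⁻¹ := by
      rw [← rpow_natCast, ← rpow_mul ht0.le, ← rpow_natCast, ← rpow_neg ht0.le]
      norm_num
    have h2 : (1 - t ^ 4) ^ ((1 : ℝ) / 2 - 1) = 1 / √(1 - t ^ 4) := by
      have : 0 ≤ 1 - t ^ 4 := by nlinarith [pow_lt_one₀ ht0.le ht1 (by norm_num : 4 ≠ 0)]
      rw [show (1 : ℝ) / 2 - 1 = -(1 / 2) by norm_num, rpow_neg this, sqrt_eq_rpow,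
        inv_eq_one_div]
    rw [h1, h2]
    field_simp
    norm_num
  have hbeta := Gamma_mul_Gamma_eq_integral (a := 1 / 4) (b := 1 / 2) (by norm_num) (by norm_num)
  rw [← hsubst, Gamma_one_half_eq, show (1 : ℝ) / 4 + 1 / 2 = 3 / 4 by norm_num] at hbeta
  have hπ : √π ^ 2 = π := sq_sqrt pi_pos.le
  rw [sqrt_mul zero_le_two, eq_div_iff (by positivity)]
  refine mul_right_cancel₀ (sqrt_pos.2 pi_pos).ne' ?_
  linear_combination (4 * I * √2) * hπ - 4 * I * Gamma_one_fourth_mul_Gamma_three_fourths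
    - Gamma (1 / 4) * hbeta

theorem stmt15 :
    ∑' n : ℕ, (1 / 4 : ℝ) ^ n * (Nat.centralBinom n : ℝ) / (4 * (n : ℝ) + 1)
        = Real.Gamma (1 / 4) ^ 2 / (4 * Real.sqrt (2 * π)) ∧
      ∑' n : ℕ, (1 / 4 : ℝ) ^ n * (Nat.centralBinom n : ℝ) / (4 * (n : ℝ) + 1)
        = ∫ t in (0 : ℝ)..1, 1 / Real.sqrt (1 - t ^ 4) := by
  have hterm : ∀ n : ℕ, (1 / 4 : ℝ) ^ n * (Nat.centralBinom n : ℝ) / (4 * (n : ℝ) + 1)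
      = (n.centralBinom / 4 ^ n : ℝ) / (4 * n + 1) := fun n ↦ by rw [one_div_pow]; ring
  rw [tsum_congr hterm, hasSum_centralBinom_div_four_pow_div.tsum_eq,
    intervalIntegral.integral_of_le zero_le_one, integral_Ioc_eq_integral_Ioo]
  exact ⟨integral_one_div_sqrt_one_sub_pow_four, rfl⟩
end

section
/- For every natural number n, ∫_0^1 u^{n+1/2} ln(1−u) du = (4 ln 2 − 4 O_{n+1} − 4/(2n+3))/(2n+3). -/
/-!
Substituting `u = s ^ 2` turns the integral into `∫₀¹ 2 s^(2n+2) log (1 - s²) ds`. Integrating by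
parts against `(s^(2n+3) - 1) / (2n+3)`, which vanishes at `s = 1`, leaves the rational function
`2s (1 - s^(2n+3)) / (1 - s²) = 2 ∑_{j ≤ n} s^(2j+2) + 2 - 2 / (1 + s)`, whose integral over `[0, 1]`
produces the odd harmonic number and `log 2`. The integrand is nonpositive, so its integrability
comes for free from the fundamental theorem of calculus.
-/

open Real

open Finset Set MeasureTheory intervalIntegral

lemma O_succ (m : ℕ) : O (m + 1) = O m + 1 / (2 * m + 1) := by
  simp only [O, sum_range_succ]

lemma O_succ_eq_one_add (m : ℕ) : O (m + 1) = 1 + ∑ j ∈ range m, (1 : ℝ) / (2 * j + 3) := by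
  rw [O, sum_range_succ', add_comm]
  push_cast
  congr 1
  · norm_num
  · exact sum_congr rfl fun j _ => by ring_nf

lemma continuousOn_pow_sub_one_mul_log_one_sub_sq (m : ℕ) :
    ContinuousOn (fun s : ℝ => (s ^ m - 1) * log (1 - s ^ 2)) (Ioi (-1)) := by
  -- `s ^ m - 1 = (s - 1) ∑ sⁱ` isolates the continuous factor `(1 - s) log (1 - s)`.
  have key : ∀ s ∈ Ioi (-1 : ℝ), (∑ i ∈ range m, s ^ i) * -((1 - s) * log (1 - s))
      + (s ^ m - 1) * log (1 + s) = (s ^ m - 1) * log (1 - s ^ 2) := by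
    intro s hs
    rcases eq_or_ne s 1 with rfl | hs1
    · simp
    have h1 : 1 - s ≠ 0 := sub_ne_zero.2 hs1.symm
    have h2 : 1 + s ≠ 0 := by linarith [mem_Ioi.1 hs]
    rw [show 1 - s ^ 2 = (1 - s) * (1 + s) by ring, log_mul h1 h2]
    linear_combination log (1 - s) * geom_sum_mul s m
  refine ContinuousOn.congr ?_ (fun s hs => (key s hs).symm)
  have hlog : ContinuousOn (fun s : ℝ => log (1 + s)) (Ioi (-1)) :=
    ContinuousOn.log (by fun_prop) fun s hs => by linarith [mem_Ioi.1 hs]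
  have hml : Continuous fun s : ℝ => (1 - s) * log (1 - s) :=
    continuous_mul_log.comp (continuous_const.sub continuous_id)
  exact ((continuous_finsetSum _ fun i _ => continuous_pow i).mul hml.neg).continuousOn.add
    ((by fun_prop : Continuous fun s : ℝ => s ^ m - 1).continuousOn.mul hlog)

-- The integration by parts of the header, carried out in closed form.
noncomputable def logOneSubSqPrimitive (n : ℕ) (s : ℝ) : ℝ :=
  2 / (2 * n + 3) * ((s ^ (2 * n + 3) - 1) * log (1 - s ^ 2))
    - 4 / (2 * n + 3) * (∑ j ∈ range (n + 1), s ^ (2 * j + 3) / (2 * j + 3) + s - log (1 + s))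

theorem hasDerivAt_logOneSubSqPrimitive (n : ℕ) {s : ℝ} (hs : s ^ 2 ≠ 1) :
    HasDerivAt (logOneSubSqPrimitive n) (2 * s ^ (2 * n + 2) * log (1 - s ^ 2)) s := by
  have hsub : 1 - s ^ 2 ≠ 0 := sub_ne_zero.2 hs.symm
  have hadd : 1 + s ≠ 0 := fun h => hs (by rw [eq_neg_of_add_eq_zero_right h]; norm_num)
  have hsum : HasDerivAt (fun s : ℝ => ∑ j ∈ range (n + 1), s ^ (2 * j + 3) / (2 * j + 3))
      (s ^ 2 * ∑ j ∈ range (n + 1), (s ^ 2) ^ j) s := by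
    rw [mul_sum]
    refine HasDerivAt.fun_sum fun j _ => ?_
    have hj := (hasDerivAt_pow (2 * j + 3) s).div_const (2 * j + 3 : ℝ)
    refine hj.congr_deriv ?_
    rw [show 2 * j + 3 - 1 = 2 * j + 2 by omega]
    field_simp
    push_cast
    ring
  have hpow := (hasDerivAt_pow (2 * n + 3) s).sub_const 1
  have hlog := ((hasDerivAt_pow 2 s).const_sub 1).log hsub
  have hlog' := ((hasDerivAt_id s).const_add 1).log hadd
  refine HasDerivAt.congr_deriv (f := logOneSubSqPrimitive n) (((hpow.mul hlog).const_mul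
    (2 / (2 * n + 3 : ℝ))).sub (((hsum.add (hasDerivAt_id s)).sub hlog').const_mul
    (4 / (2 * n + 3 : ℝ)))) ?_
  have hgeom := geom_sum_mul (s ^ 2) (n + 1)
  rw [show 2 * n + 3 - 1 = 2 * n + 2 by omega]
  simp only [id, Nat.cast_ofNat, Nat.add_one_sub_one, pow_one]
  field_simp
  push_cast
  linear_combination 4 * s ^ 2 * (1 + s) * hgeom

theorem continuousOn_logOneSubSqPrimitive (n : ℕ) :
    ContinuousOn (logOneSubSqPrimitive n) (Ioi (-1)) := by
  have hlog : ContinuousOn (fun s : ℝ => log (1 + s)) (Ioi (-1)) :=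
    ContinuousOn.log (by fun_prop) fun s hs => by linarith [mem_Ioi.1 hs]
  exact (continuousOn_const.mul (continuousOn_pow_sub_one_mul_log_one_sub_sq _)).sub
    (continuousOn_const.mul ((by fun_prop : Continuous fun s : ℝ =>
      ∑ j ∈ range (n + 1), s ^ (2 * j + 3) / (2 * j + 3) + s).continuousOn.sub hlog))

lemma logOneSubSqPrimitive_zero (n : ℕ) : logOneSubSqPrimitive n 0 = 0 := by
  simp [logOneSubSqPrimitive]

lemma logOneSubSqPrimitive_one (n : ℕ) : logOneSubSqPrimitive n 1
    = (4 * log 2 - 4 * O (n + 1) - 4 / (2 * n + 3)) / (2 * n + 3) := by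
  have hO : 1 + ∑ j ∈ range (n + 1), (1 : ℝ) / (2 * j + 3) = O (n + 1) + 1 / (2 * n + 3) := by
    rw [← O_succ_eq_one_add, O_succ]
    push_cast
    ring
  simp only [logOneSubSqPrimitive, one_pow, sub_self, zero_mul, mul_zero, zero_sub]
  rw [one_add_one_eq_two]
  linear_combination (-4 / (2 * n + 3 : ℝ)) * hO

lemma rpow_natCast_add_half {x : ℝ} (hx : 0 ≤ x) (n : ℕ) :
    x ^ ((n : ℝ) + 1 / 2) = √x ^ (2 * n + 1) := by
  rw [sqrt_eq_rpow, ← rpow_natCast, ← rpow_mul hx]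
  push_cast
  ring_nf

theorem hasDerivAt_logOneSubSqPrimitive_sqrt (n : ℕ) {u : ℝ} (hu0 : 0 < u) (hu1 : u ≠ 1) :
    HasDerivAt (fun u => logOneSubSqPrimitive n √u) (u ^ ((n : ℝ) + 1 / 2) * log (1 - u)) u := by
  have hsq : √u ^ 2 = u := sq_sqrt hu0.le
  refine ((hasDerivAt_logOneSubSqPrimitive n (hsq.symm ▸ hu1)).comp u
    (hasDerivAt_sqrt hu0.ne')).congr_deriv ?_
  rw [hsq, rpow_natCast_add_half hu0.le]
  field_simp
  ring

theorem stmt17 (n : ℕ) :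
    ∫ u in (0 : ℝ)..1, u ^ ((n : ℝ) + 1 / 2) * Real.log (1 - u)
      = (4 * Real.log 2 - 4 * O (n + 1) - 4 / (2 * (n : ℝ) + 3)) / (2 * (n : ℝ) + 3) := by
  set F := fun u : ℝ => logOneSubSqPrimitive n √u
  set f := fun u : ℝ => u ^ ((n : ℝ) + 1 / 2) * log (1 - u)
  have hderiv : ∀ u ∈ Ioo (0 : ℝ) 1, HasDerivAt F (f u) u := fun u hu =>
    hasDerivAt_logOneSubSqPrimitive_sqrt n hu.1 hu.2.ne
  have hcont : ContinuousOn F (Icc 0 1) :=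
    ((continuousOn_logOneSubSqPrimitive n).comp_continuous continuous_sqrt
      fun u => neg_one_lt_zero.trans_le (sqrt_nonneg u)).continuousOn
  have hf_nonpos : ∀ u ∈ Ioo (0 : ℝ) 1, f u ≤ 0 := fun u hu =>
    mul_nonpos_of_nonneg_of_nonpos (rpow_nonneg hu.1.le _) (log_nonpos (by linarith [hu.2])
      (by linarith [hu.1]))
  have hint : IntervalIntegrable f volume 0 1 := by
    rw [intervalIntegrable_iff_integrableOn_Ioc_of_le zero_le_one, ← integrableOn_neg_iff]
    exact integrableOn_deriv_of_nonneg hcont.neg (fun u hu => (hderiv u hu).neg)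
      fun u hu => neg_nonneg.2 (hf_nonpos u hu)
  rw [integral_eq_sub_of_hasDerivAt_of_le zero_le_one hcont hderiv hint]
  simp only [F, sqrt_one, sqrt_zero, logOneSubSqPrimitive_one, logOneSubSqPrimitive_zero, sub_zero]
end
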